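/- Let 0 < α < β and suppose the function x ↦ (1 − e^{−|x|^β})/(1 − e^{−|x|^α}) (extended continuously at 0) belongs to W₁(ℝ^d), i.e. equals c + ĝ for a constant c and some g ∈ L^1(ℝ^d). Then there is a constant C = C(α, β, d) such that for every f ∈ L^p(ℝ^d), 1 ≤ p ≤ ∞, and every ε > 0, ‖f − f * K^β_ε‖_p ≤ C ‖f − f * K^α_ε‖_p, where K^γ_ε is the L^1 kernel whose Fourier transform is y ↦ e^{−|εy|^γ}. -/

import Mathlib

open MeasureTheory Filter Set
open scoped ENNReal NNReal

/-- Convolution of two complex-valued functions on `ℝ^d`. -/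
noncomputable def funConv {d : ℕ} (f g : EuclideanSpace ℝ (Fin d) → ℂ)
    (x : EuclideanSpace ℝ (Fin d)) : ℂ :=
  ∫ y, f (x - y) * g y

/-- Fourier transform `ĝ(y) = ∫ g(x) e^{-i⟨x,y⟩} dx` of an integrable function. -/
noncomputable def funFT {d : ℕ} (g : EuclideanSpace ℝ (Fin d) → ℂ)
    (y : EuclideanSpace ℝ (Fin d)) : ℂ :=
  ∫ x, g x * Complex.exp (-(Complex.I * ((inner ℝ x y : ℝ) : ℂ)))

/-!
Put `g_ε x = ε⁻ᵈ g (ε⁻¹ x)`, so that `ĝ_ε y = ĝ (ε y)` and `‖g_ε‖₁ = ‖g‖₁`. Since `ĝ` vanishes at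
infinity (Riemann–Lebesgue) while the ratio tends to `1`, the constant is `c = 1`; the hypothesis
at `ε y` then reads `1 - K̂β = (1 + ĝ_ε) (1 - K̂α)`, which by injectivity of the Fourier transform
on `L¹` is the kernel identity `Kβ + g_ε = Kα + g_ε * Kα`. Convolving with `f` and using
associativity gives `f - f * Kβ = u + g_ε * u` with `u = f - f * Kα`, so Young's inequality
`‖g_ε * u‖_p ≤ ‖g_ε‖₁ ‖u‖_p` yields the claim with `C = 1 + ‖g‖₁`.
-/

open scoped Convolution FourierTransform SchwartzMap Topology

namespace MeasureTheory

/-- Jensen's inequality for `t ↦ t ^ p` with respect to the measure `a • μ`. -/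
theorem rpow_lintegral_mul_le {Ω : Type*} [MeasurableSpace Ω] {μ : Measure Ω} {p : ℝ} (hp : 1 ≤ p)
    {a c : Ω → ℝ≥0∞} (ha : AEMeasurable a μ) (hc : AEMeasurable c μ) :
    (∫⁻ t, a t * c t ∂μ) ^ p ≤ (∫⁻ t, a t ∂μ) ^ (p - 1) * ∫⁻ t, a t * c t ^ p ∂μ := by
  have hp0 : 0 < p := zero_lt_one.trans_le hp
  have hp1 : 0 ≤ 1 - p⁻¹ := sub_nonneg.2 (inv_le_one_of_one_le₀ hp)
  have hsplit : ∀ t, a t * c t = (a t * c t ^ p) ^ p⁻¹ * a t ^ (1 - p⁻¹) := fun t => by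
    rw [ENNReal.mul_rpow_of_nonneg _ _ (inv_nonneg.2 hp0.le), ← ENNReal.rpow_mul,
      mul_inv_cancel₀ hp0.ne', ENNReal.rpow_one, mul_right_comm, ← ENNReal.rpow_add_of_nonneg _ _
      (inv_nonneg.2 hp0.le) hp1, add_sub_cancel, ENNReal.rpow_one]
  calc (∫⁻ t, a t * c t ∂μ) ^ p
      = (∫⁻ t, (a t * c t ^ p) ^ p⁻¹ * a t ^ (1 - p⁻¹) ∂μ) ^ p := by rw [lintegral_congr hsplit]
    _ ≤ ((∫⁻ t, a t * c t ^ p ∂μ) ^ p⁻¹ * (∫⁻ t, a t ∂μ) ^ (1 - p⁻¹)) ^ p := by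
        gcongr
        exact ENNReal.lintegral_mul_norm_pow_le (ha.mul (hc.pow_const p)) ha
          (inv_nonneg.2 hp0.le) hp1 (add_sub_cancel _ _)
    _ = (∫⁻ t, a t ∂μ) ^ (p - 1) * ∫⁻ t, a t * c t ^ p ∂μ := by
        rw [ENNReal.mul_rpow_of_nonneg _ _ hp0.le, ← ENNReal.rpow_mul, ← ENNReal.rpow_mul,
          inv_mul_cancel₀ hp0.ne', ENNReal.rpow_one, sub_mul, one_mul, inv_mul_cancel₀ hp0.ne',
          mul_comm]

theorem ae_lt_top_of_eLpNorm_lt_top {Ω : Type*} [MeasurableSpace Ω] {ν : Measure Ω} {p : ℝ≥0∞}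
    (hp : p ≠ 0) {F : Ω → ℝ≥0∞} (hF : AEMeasurable F ν) (h : eLpNorm F p ν < ∞) :
    ∀ᵐ x ∂ν, F x < ∞ := by
  rcases eq_or_ne p ∞ with rfl | hp_top
  · rw [eLpNorm_exponent_top] at h
    exact (ae_le_eLpNormEssSup (f := F)).mono fun x hx => hx.trans_lt h
  · rw [eLpNorm_lt_top_iff_lintegral_rpow_enorm_lt_top hp hp_top] at h
    filter_upwards [ae_lt_top' (hF.pow_const _) h.ne] with x hx
    exact (ENNReal.rpow_lt_top_iff_of_pos (ENNReal.toReal_pos hp hp_top)).1 hx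

section Convolution

variable {G : Type*} [AddGroup G] [MeasurableSpace G] {μ : Measure G} {𝕜 : Type*} [RCLike 𝕜]

theorem enorm_convolution_le (K f : G → 𝕜) (x : G) :
    ‖(K ⋆[ContinuousLinearMap.mul 𝕜 𝕜, μ] f) x‖ₑ ≤ ∫⁻ t, ‖K t‖ₑ * ‖f (x - t)‖ₑ ∂μ := by
  rw [convolution_def]
  refine (enorm_integral_le_lintegral_enorm _).trans_eq ?_
  simp only [ContinuousLinearMap.mul_apply', enorm_mul]

variable [MeasurableAdd₂ G] [MeasurableNeg G] [SFinite μ] [μ.IsAddRightInvariant]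

theorem lintegral_rpow_lintegral_mul_sub_le {p : ℝ} (hp : 1 ≤ p) {a b : G → ℝ≥0∞}
    (ha : AEMeasurable a μ) (hb : AEMeasurable b μ) :
    ∫⁻ x, (∫⁻ t, a t * b (x - t) ∂μ) ^ p ∂μ ≤ (∫⁻ t, a t ∂μ) ^ p * ∫⁻ x, b x ^ p ∂μ := by
  have hmeas : AEMeasurable (Function.uncurry fun x t => a t * b (x - t) ^ p) (μ.prod μ) :=
    ha.comp_snd.mul ((hb.pow_const p).comp_quasiMeasurePreserving
      (quasiMeasurePreserving_sub_of_right_invariant μ μ))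
  calc ∫⁻ x, (∫⁻ t, a t * b (x - t) ∂μ) ^ p ∂μ
      ≤ ∫⁻ x, (∫⁻ t, a t ∂μ) ^ (p - 1) * ∫⁻ t, a t * b (x - t) ^ p ∂μ ∂μ :=
        lintegral_mono fun x => rpow_lintegral_mul_le hp ha <|
          hb.comp_quasiMeasurePreserving (quasiMeasurePreserving_sub_left_of_right_invariant μ x)
    _ = (∫⁻ t, a t ∂μ) ^ (p - 1) * ∫⁻ t, ∫⁻ x, a t * b x ^ p ∂μ ∂μ := by
        have hinner : AEMeasurable (fun x => ∫⁻ t, a t * b (x - t) ^ p ∂μ) μ :=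
          hmeas.lintegral_prod_right'
        rw [lintegral_const_mul'' _ hinner, lintegral_lintegral_swap hmeas]
        congr 1
        exact lintegral_congr fun t => lintegral_sub_right_eq_self (fun x => a t * b x ^ p) t
    _ = (∫⁻ t, a t ∂μ) ^ p * ∫⁻ x, b x ^ p ∂μ := by
        simp_rw [lintegral_const_mul'' _ (hb.pow_const p)]
        have hA : ∀ A : ℝ≥0∞, A ^ (p - 1) * A = A ^ p := fun A => by
          simpa using
            (ENNReal.rpow_add_of_nonneg (x := A) (p - 1) 1 (sub_nonneg.2 hp) zero_le_one).symm
        rw [lintegral_mul_const'' _ ha, ← mul_assoc, hA]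

theorem eLpNorm_lintegral_mul_sub_le {p : ℝ≥0∞} (hp : 1 ≤ p) {a b : G → ℝ≥0∞}
    (ha : AEMeasurable a μ) (hb : AEMeasurable b μ) :
    eLpNorm (fun x => ∫⁻ t, a t * b (x - t) ∂μ) p μ ≤ (∫⁻ t, a t ∂μ) * eLpNorm b p μ := by
  rcases eq_or_ne p ∞ with rfl | hp_top
  · simp only [eLpNorm_exponent_top]
    refine essSup_le_of_ae_le _ (.of_forall fun x => ?_)
    have hb_ae : ∀ᵐ t ∂μ, b (x - t) ≤ eLpNormEssSup b μ :=
      (quasiMeasurePreserving_sub_left_of_right_invariant μ x).ae (ae_le_eLpNormEssSup (f := b))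
    calc ∫⁻ t, a t * b (x - t) ∂μ ≤ ∫⁻ t, a t * eLpNormEssSup b μ ∂μ :=
          lintegral_mono_ae (hb_ae.mono fun t ht => by gcongr)
      _ = (∫⁻ t, a t ∂μ) * eLpNormEssSup b μ := lintegral_mul_const'' _ ha
  · have hp0 : p ≠ 0 := (zero_lt_one.trans_le hp).ne'
    have hr : 0 < p.toReal := ENNReal.toReal_pos hp0 hp_top
    have hr1 : 1 ≤ p.toReal := by simpa using ENNReal.toReal_mono hp_top hp
    simp only [eLpNorm_eq_lintegral_rpow_enorm_toReal hp0 hp_top, enorm_eq_self]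
    calc (∫⁻ x, (∫⁻ t, a t * b (x - t) ∂μ) ^ p.toReal ∂μ) ^ (1 / p.toReal)
        ≤ ((∫⁻ t, a t ∂μ) ^ p.toReal * ∫⁻ x, b x ^ p.toReal ∂μ) ^ (1 / p.toReal) := by
          gcongr
          exact lintegral_rpow_lintegral_mul_sub_le hr1 ha hb
      _ = (∫⁻ t, a t ∂μ) * (∫⁻ x, b x ^ p.toReal ∂μ) ^ (1 / p.toReal) := by
          rw [ENNReal.mul_rpow_of_nonneg _ _ (by positivity), ← ENNReal.rpow_mul,
            mul_one_div_cancel hr.ne', ENNReal.rpow_one]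

theorem eLpNorm_convolution_le {p : ℝ≥0∞} (hp : 1 ≤ p) {K f : G → 𝕜}
    (hK : AEStronglyMeasurable K μ) (hf : AEStronglyMeasurable f μ) :
    eLpNorm (K ⋆[ContinuousLinearMap.mul 𝕜 𝕜, μ] f) p μ ≤ eLpNorm K 1 μ * eLpNorm f p μ := by
  calc eLpNorm (K ⋆[ContinuousLinearMap.mul 𝕜 𝕜, μ] f) p μ
      ≤ eLpNorm (fun x => ∫⁻ t, ‖K t‖ₑ * ‖f (x - t)‖ₑ ∂μ) p μ :=
        eLpNorm_mono_enorm fun x => enorm_convolution_le K f x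
    _ ≤ (∫⁻ t, ‖K t‖ₑ ∂μ) * eLpNorm (fun x => ‖f x‖ₑ) p μ :=
        eLpNorm_lintegral_mul_sub_le (a := fun t => ‖K t‖ₑ) (b := fun x => ‖f x‖ₑ) hp hK.enorm
          hf.enorm
    _ = eLpNorm K 1 μ * eLpNorm f p μ := by rw [eLpNorm_one_eq_lintegral_enorm, eLpNorm_enorm]

theorem MemLp.convolution {p : ℝ≥0∞} (hp : 1 ≤ p) {K f : G → 𝕜} (hK : Integrable K μ)
    (hf : MemLp f p μ) : MemLp (K ⋆[ContinuousLinearMap.mul 𝕜 𝕜, μ] f) p μ :=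
  ⟨(hK.1.convolution_integrand _ hf.1).integral_prod_right',
    (eLpNorm_convolution_le hp hK.1 hf.1).trans_lt
      (ENNReal.mul_lt_top (memLp_one_iff_integrable.2 hK).2 hf.2)⟩

theorem MemLp.ae_convolutionExistsAt {p : ℝ≥0∞} (hp : 1 ≤ p) {K f : G → 𝕜}
    (hK : Integrable K μ) (hf : MemLp f p μ) :
    ∀ᵐ x ∂μ, ConvolutionExistsAt K f x (ContinuousLinearMap.mul 𝕜 𝕜) μ := by
  have hmeas : AEMeasurable (fun x => ∫⁻ t, ‖K t‖ₑ * ‖f (x - t)‖ₑ ∂μ) μ :=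
    (hK.1.enorm.comp_snd.mul (hf.1.enorm.comp_quasiMeasurePreserving
      (quasiMeasurePreserving_sub_of_right_invariant μ μ))).lintegral_prod_right'
  have hfin : eLpNorm (fun x => ∫⁻ t, ‖K t‖ₑ * ‖f (x - t)‖ₑ ∂μ) p μ < ∞ := by
    refine (eLpNorm_lintegral_mul_sub_le (a := fun t => ‖K t‖ₑ) (b := fun x => ‖f x‖ₑ) hp
      hK.1.enorm hf.1.enorm).trans_lt ?_
    rw [eLpNorm_enorm]
    exact ENNReal.mul_lt_top hK.2 hf.2
  filter_upwards [ae_lt_top_of_eLpNorm_lt_top (zero_lt_one.trans_le hp).ne' hmeas hfin] with x hx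
  refine ⟨hK.1.convolution_integrand_snd _ hf.1 x, ?_⟩
  simpa only [HasFiniteIntegral, ContinuousLinearMap.mul_apply', enorm_mul] using hx

theorem MemLp.convolution_assoc_ae {p : ℝ≥0∞} (hp : 1 ≤ p) {k K f : G → 𝕜}
    (hk : Integrable k μ) (hK : Integrable K μ) (hf : MemLp f p μ) :
    (k ⋆[ContinuousLinearMap.mul 𝕜 𝕜, μ] K) ⋆[ContinuousLinearMap.mul 𝕜 𝕜, μ] f =ᵐ[μ]
      k ⋆[ContinuousLinearMap.mul 𝕜 𝕜, μ] (K ⋆[ContinuousLinearMap.mul 𝕜 𝕜, μ] f) := by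
  have hKf := MemLp.ae_convolutionExistsAt hp hK.norm hf.norm
  have hkKf := MemLp.ae_convolutionExistsAt hp hk.norm (MemLp.convolution hp hK.norm hf.norm)
  filter_upwards [hkKf] with x hx
  exact convolution_assoc _ _ _ _ (fun a b c => mul_assoc a b c) hk.1 hK.1 hf.1
    (hk.ae_convolution_exists _ hK) hKf hx

theorem MemLp.sub_convolution_ae_eq {p : ℝ≥0∞} (hp : 1 ≤ p) {k K K' f : G → 𝕜}
    (hk : Integrable k μ) (hK : Integrable K μ) (hK' : Integrable K' μ) (hf : MemLp f p μ)
    (hrel : K' + k =ᵐ[μ] K + k ⋆[ContinuousLinearMap.mul 𝕜 𝕜, μ] K) :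
    f - K' ⋆[ContinuousLinearMap.mul 𝕜 𝕜, μ] f =ᵐ[μ]
      (f - K ⋆[ContinuousLinearMap.mul 𝕜 𝕜, μ] f) +
        k ⋆[ContinuousLinearMap.mul 𝕜 𝕜, μ] (f - K ⋆[ContinuousLinearMap.mul 𝕜 𝕜, μ] f) := by
  set L := ContinuousLinearMap.mul 𝕜 𝕜
  have hKf := MemLp.convolution hp hK hf
  have hconv := congrFun (convolution_congr L hrel (EventuallyEq.refl _ f))
  filter_upwards [hf.ae_convolutionExistsAt hp hK', hf.ae_convolutionExistsAt hp hk,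
    hf.ae_convolutionExistsAt hp hK, hf.ae_convolutionExistsAt hp (hk.integrable_convolution L hK),
    (hf.sub hKf).ae_convolutionExistsAt hp hk, hKf.ae_convolutionExistsAt hp hk,
    hf.convolution_assoc_ae hp hk hK] with x hK'fx hkfx hKfx hkKfx hkux hkKfx' hassoc
  have hsplit :
      (k ⋆[L, μ] f) x = (k ⋆[L, μ] (f - K ⋆[L, μ] f)) x + (k ⋆[L, μ] (K ⋆[L, μ] f)) x := by
    rw [← hkux.distrib_add hkKfx', sub_add_cancel]
  have hsum := hconv x
  rw [hK'fx.add_distrib hkfx, hKfx.add_distrib hkKfx] at hsum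
  simp only [Pi.add_apply, Pi.sub_apply]
  linear_combination -hsum + hsplit - hassoc

theorem MemLp.eLpNorm_sub_convolution_le {p : ℝ≥0∞} (hp : 1 ≤ p) {k K K' f : G → 𝕜}
    (hk : Integrable k μ) (hK : Integrable K μ) (hK' : Integrable K' μ) (hf : MemLp f p μ)
    (hrel : K' + k =ᵐ[μ] K + k ⋆[ContinuousLinearMap.mul 𝕜 𝕜, μ] K) :
    eLpNorm (f - K' ⋆[ContinuousLinearMap.mul 𝕜 𝕜, μ] f) p μ ≤
      (1 + eLpNorm k 1 μ) * eLpNorm (f - K ⋆[ContinuousLinearMap.mul 𝕜 𝕜, μ] f) p μ := by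
  set u := f - K ⋆[ContinuousLinearMap.mul 𝕜 𝕜, μ] f
  have hu : MemLp u p μ := hf.sub (MemLp.convolution hp hK hf)
  calc eLpNorm (f - K' ⋆[ContinuousLinearMap.mul 𝕜 𝕜, μ] f) p μ
      = eLpNorm (u + k ⋆[ContinuousLinearMap.mul 𝕜 𝕜, μ] u) p μ :=
        eLpNorm_congr_ae (hf.sub_convolution_ae_eq hp hk hK hK' hrel)
    _ ≤ eLpNorm u p μ + eLpNorm (k ⋆[ContinuousLinearMap.mul 𝕜 𝕜, μ] u) p μ :=
        eLpNorm_add_le hu.1 (MemLp.convolution hp hk hu).1 hp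
    _ ≤ eLpNorm u p μ + eLpNorm k 1 μ * eLpNorm u p μ := by
        gcongr
        exact eLpNorm_convolution_le hp hk.1 hu.1
    _ = (1 + eLpNorm k 1 μ) * eLpNorm u p μ := by ring

end Convolution

section Fourier

variable {V : Type*} [NormedAddCommGroup V] [InnerProductSpace ℝ V] [FiniteDimensional ℝ V]
  [MeasurableSpace V] [BorelSpace V] {F : Type*} [NormedAddCommGroup F] [NormedSpace ℂ F]

theorem fourier_add_of_integrable {f g : V → F} (hf : Integrable f) (hg : Integrable g) :
    𝓕 (f + g) = 𝓕 f + 𝓕 g :=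
  VectorFourier.fourierIntegral_add Real.continuous_fourierChar continuous_inner hf hg

theorem integral_smul_eq_zero_of_fourier_ae_eq_zero [CompleteSpace F] {f : V → F}
    (hf : Integrable f) (h : 𝓕 f =ᵐ[volume] 0) (φ : 𝓢(V, ℂ)) : ∫ x, φ x • f x = 0 := by
  -- write `φ = 𝓕 (𝓕⁻ φ)` and move `𝓕` onto `f`
  have key := VectorFourier.integral_fourierIntegral_smul_eq_flip (μ := volume) (ν := volume)
    (L := innerₗ V) (f := fun x => (𝓕⁻ φ) x) (g := f) Real.continuous_fourierChar continuous_inner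
    (𝓕⁻ φ).integrable hf
  have hflip : (innerₗ V).flip = innerₗ V := by ext; simp
  rw [hflip] at key
  change ∫ ξ, 𝓕 (⇑(𝓕⁻ φ : 𝓢(V, ℂ))) ξ • f ξ = ∫ x, (𝓕⁻ φ : 𝓢(V, ℂ)) x • 𝓕 f x at key
  rw [← SchwartzMap.fourier_coe, FourierTransform.fourier_fourierInv_eq] at key
  rw [key]
  refine integral_eq_zero_of_ae ?_
  filter_upwards [h] with x hx
  simp [hx]

theorem Integrable.ae_eq_zero_of_fourier_ae_eq_zero [CompleteSpace F] {f : V → F}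
    (hf : Integrable f) (h : 𝓕 f =ᵐ[volume] 0) : f =ᵐ[volume] 0 := by
  refine ae_eq_zero_of_integral_contDiff_smul_eq_zero hf.locallyIntegrable
    fun g g_smooth g_cpt => ?_
  have hg₁ : HasCompactSupport (Complex.ofRealCLM ∘ g) := g_cpt.comp_left rfl
  have hg₂ := Complex.ofRealCLM.contDiff.comp g_smooth
  simpa using integral_smul_eq_zero_of_fourier_ae_eq_zero hf h (hg₁.toSchwartzMap hg₂)

theorem Integrable.ae_eq_of_fourier_ae_eq [CompleteSpace F] {f g : V → F} (hf : Integrable f)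
    (hg : Integrable g) (h : 𝓕 f =ᵐ[volume] 𝓕 g) : f =ᵐ[volume] g := by
  have hsub : 𝓕 (f - g) = 𝓕 f - 𝓕 g := by
    rw [eq_sub_iff_add_eq, ← fourier_add_of_integrable (hf.sub hg) hg, sub_add_cancel]
  have hzero := (hf.sub hg).ae_eq_zero_of_fourier_ae_eq_zero <| by
    filter_upwards [h] with w hw
    simp [hsub, hw]
  filter_upwards [hzero] with x hx
  exact sub_eq_zero.1 hx

end Fourier

end MeasureTheory

section GaussWeierstrass

variable {d : ℕ}

theorem funFT_eq_fourier (g : EuclideanSpace ℝ (Fin d) → ℂ) (y : EuclideanSpace ℝ (Fin d)) :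
    funFT g y = 𝓕 g ((2 * Real.pi)⁻¹ • y) := by
  rw [Real.fourier_eq, funFT]
  refine integral_congr_ae (.of_forall fun v => ?_)
  dsimp only
  rw [Circle.smul_def, Real.fourierChar_apply, real_inner_smul_right, smul_eq_mul, mul_comm]
  congr 2
  push_cast
  field_simp

theorem funFT_add {f g : EuclideanSpace ℝ (Fin d) → ℂ} (hf : Integrable f) (hg : Integrable g)
    (y : EuclideanSpace ℝ (Fin d)) : funFT (f + g) y = funFT f y + funFT g y := by
  simp only [funFT_eq_fourier, fourier_add_of_integrable hf hg, Pi.add_apply]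

theorem funFT_convolution {f g : EuclideanSpace ℝ (Fin d) → ℂ} (hf : Integrable f)
    (hg : Integrable g) (y : EuclideanSpace ℝ (Fin d)) :
    funFT (f ⋆[ContinuousLinearMap.mul ℂ ℂ] g) y = funFT f y * funFT g y := by
  simp only [funFT_eq_fourier, Real.fourier_mul_convolution_eq hf hg]

theorem tendsto_funFT_cocompact (g : EuclideanSpace ℝ (Fin d) → ℂ) :
    Tendsto (funFT g) (cocompact _) (𝓝 0) := by
  have hscale := (Homeomorph.smulOfNeZero ((2 * Real.pi)⁻¹ : ℝ) (by positivity)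
    (α := EuclideanSpace ℝ (Fin d))).isClosedEmbedding.tendsto_cocompact
  convert (tendsto_integral_exp_inner_smul_cocompact g).comp hscale using 1
  exact funext (funFT_eq_fourier g)

theorem ae_eq_of_funFT_eq [NeZero d] {f g : EuclideanSpace ℝ (Fin d) → ℂ} (hf : Integrable f)
    (hg : Integrable g) (h : ∀ y, y ≠ 0 → funFT f y = funFT g y) : f =ᵐ[volume] g := by
  refine hf.ae_eq_of_fourier_ae_eq hg ?_
  filter_upwards [compl_mem_ae_iff.2 (measure_singleton 0)] with w (hw : w ≠ 0)
  have h2π : (2 * Real.pi) ≠ 0 := by positivity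
  have hw' := h ((2 * Real.pi) • w) (smul_ne_zero h2π hw)
  rwa [funFT_eq_fourier, funFT_eq_fourier, smul_smul, inv_mul_cancel₀ h2π, one_smul] at hw'

noncomputable def l1Dilation (ε : ℝ) (g : EuclideanSpace ℝ (Fin d) → ℂ)
    (x : EuclideanSpace ℝ (Fin d)) : ℂ :=
  (ε ^ d)⁻¹ • g (ε⁻¹ • x)

theorem integrable_l1Dilation {ε : ℝ} (hε : ε ≠ 0) {g : EuclideanSpace ℝ (Fin d) → ℂ}
    (hg : Integrable g) : Integrable (l1Dilation ε g) :=
  (hg.comp_smul (inv_ne_zero hε)).smul ((ε ^ d)⁻¹ : ℝ)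

theorem integral_norm_l1Dilation {ε : ℝ} (hε : 0 < ε) (g : EuclideanSpace ℝ (Fin d) → ℂ) :
    ∫ x, ‖l1Dilation ε g x‖ = ∫ x, ‖g x‖ := by
  simp only [l1Dilation, norm_smul, Real.norm_of_nonneg (inv_nonneg.2 (pow_nonneg hε.le d))]
  rw [integral_const_mul, Measure.integral_comp_inv_smul_of_nonneg volume (fun x => ‖g x‖) hε.le,
    finrank_euclideanSpace_fin, smul_eq_mul, inv_mul_cancel_left₀ (pow_ne_zero d hε.ne')]

theorem eLpNorm_one_l1Dilation {ε : ℝ} (hε : 0 < ε) {g : EuclideanSpace ℝ (Fin d) → ℂ}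
    (hg : Integrable g) : eLpNorm (l1Dilation ε g) 1 volume = eLpNorm g 1 volume := by
  rw [eLpNorm_one_eq_lintegral_enorm, eLpNorm_one_eq_lintegral_enorm,
    ← ofReal_integral_norm_eq_lintegral_enorm (integrable_l1Dilation hε.ne' hg),
    ← ofReal_integral_norm_eq_lintegral_enorm hg, integral_norm_l1Dilation hε]

theorem funFT_l1Dilation {ε : ℝ} (hε : 0 < ε) (g : EuclideanSpace ℝ (Fin d) → ℂ)
    (y : EuclideanSpace ℝ (Fin d)) : funFT (l1Dilation ε g) y = funFT g (ε • y) := by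
  have hinner : ∀ x : EuclideanSpace ℝ (Fin d), inner ℝ x y = inner ℝ (ε⁻¹ • x) (ε • y) :=
    fun x => by rw [real_inner_smul_left, real_inner_smul_right, inv_mul_cancel_left₀ hε.ne']
  simp only [funFT, l1Dilation, smul_mul_assoc, integral_smul]
  simp_rw +singlePass [hinner]
  rw [Measure.integral_comp_inv_smul_of_nonneg volume
      (fun z => g z * Complex.exp (-(Complex.I * ((inner ℝ z (ε • y) : ℝ) : ℂ)))) hε.le,
    finrank_euclideanSpace_fin, smul_smul, inv_mul_cancel₀ (pow_ne_zero d hε.ne'), one_smul]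

theorem funConv_eq_convolution (f K : EuclideanSpace ℝ (Fin d) → ℂ) :
    funConv f K = K ⋆[ContinuousLinearMap.mul ℂ ℂ] f := by
  ext x
  simp only [funConv, convolution_def, ContinuousLinearMap.mul_apply', mul_comm]

theorem funConv_eq_mul_funFT_zero [Subsingleton (EuclideanSpace ℝ (Fin d))]
    (f K : EuclideanSpace ℝ (Fin d) → ℂ) (x : EuclideanSpace ℝ (Fin d)) :
    funConv f K x = f x * funFT K 0 := by
  simp [funConv, funFT, Subsingleton.elim (x - _) x, integral_const_mul]

theorem tendsto_one_sub_exp_neg_rpow_atTop {γ : ℝ} (hγ : 0 < γ) :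
    Tendsto (fun t : ℝ => 1 - Real.exp (-(t ^ γ))) atTop (𝓝 1) := by
  simpa using tendsto_const_nhds.sub
    (Real.tendsto_exp_neg_atTop_nhds_zero.comp (tendsto_rpow_atTop hγ))

theorem eq_one_of_forall_ratio_eq_add_funFT [NeZero d] {α β : ℝ} (hα : 0 < α) (hβ : 0 < β)
    {c : ℂ} {g : EuclideanSpace ℝ (Fin d) → ℂ}
    (h : ∀ x : EuclideanSpace ℝ (Fin d), x ≠ 0 →
      (((1 - Real.exp (-(‖x‖ ^ β))) / (1 - Real.exp (-(‖x‖ ^ α))) : ℝ) : ℂ) = c + funFT g x) :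
    c = 1 := by
  have hratio : Tendsto (fun x : EuclideanSpace ℝ (Fin d) =>
      (((1 - Real.exp (-(‖x‖ ^ β))) / (1 - Real.exp (-(‖x‖ ^ α))) : ℝ) : ℂ))
      (cocompact _) (𝓝 1) := by
    have hdiv := (tendsto_one_sub_exp_neg_rpow_atTop hβ).div
      (tendsto_one_sub_exp_neg_rpow_atTop hα) one_ne_zero
    rw [div_one] at hdiv
    have hlim := (Complex.continuous_ofReal.tendsto 1).comp
      (hdiv.comp (tendsto_norm_cocompact_atTop (E := EuclideanSpace ℝ (Fin d))))
    rw [Complex.ofReal_one] at hlim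
    exact hlim
  have hsum : Tendsto (fun x => c + funFT g x) (cocompact (EuclideanSpace ℝ (Fin d))) (𝓝 c) := by
    simpa using tendsto_const_nhds.add (tendsto_funFT_cocompact g)
  refine tendsto_nhds_unique (hsum.congr' ?_) hratio
  filter_upwards [isCompact_singleton.compl_mem_cocompact] with x hx
  exact (h x hx).symm

theorem add_l1Dilation_ae_eq_add_convolution [NeZero d] {α β ε : ℝ} (hε : 0 < ε)
    {g Kα Kβ : EuclideanSpace ℝ (Fin d) → ℂ} (hg : Integrable g) (hKα : Integrable Kα)
    (hKβ : Integrable Kβ)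
    (hW : ∀ x : EuclideanSpace ℝ (Fin d), x ≠ 0 →
      (((1 - Real.exp (-(‖x‖ ^ β))) / (1 - Real.exp (-(‖x‖ ^ α))) : ℝ) : ℂ) = 1 + funFT g x)
    (hFTα : ∀ y, funFT Kα y = ((Real.exp (-((ε * ‖y‖) ^ α)) : ℝ) : ℂ))
    (hFTβ : ∀ y, funFT Kβ y = ((Real.exp (-((ε * ‖y‖) ^ β)) : ℝ) : ℂ)) :
    Kβ + l1Dilation ε g =ᵐ[volume]
      Kα + l1Dilation ε g ⋆[ContinuousLinearMap.mul ℂ ℂ] Kα := by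
  have hgε := integrable_l1Dilation hε.ne' hg
  have hgεKα := hgε.integrable_convolution (ContinuousLinearMap.mul ℂ ℂ) hKα
  refine ae_eq_of_funFT_eq (hKβ.add hgε) (hKα.add hgεKα) fun y hy => ?_
  have hnorm : ‖ε • y‖ = ε * ‖y‖ := by rw [norm_smul, Real.norm_of_nonneg hε.le]
  have hden : (1 : ℝ) - Real.exp (-((ε * ‖y‖) ^ α)) ≠ 0 :=
    sub_ne_zero.2 (Real.exp_lt_one_iff.2 (neg_lt_zero.2
      (Real.rpow_pos_of_pos (mul_pos hε (norm_pos_iff.2 hy)) α))).ne'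
  have hmul := hW (ε • y) (smul_ne_zero hε.ne' hy)
  rw [hnorm, Complex.ofReal_div, div_eq_iff (by exact_mod_cast hden)] at hmul
  rw [funFT_add hKβ hgε, funFT_add hKα hgεKα, funFT_convolution hgε hKα, funFT_l1Dilation hε,
    hFTα, hFTβ]
  push_cast at hmul ⊢
  linear_combination -hmul

end GaussWeierstrass

/-- Comparison of Gauss–Weierstrass type means: if the ratio
`(1 - e^{-|x|^β})/(1 - e^{-|x|^α})` belongs to `W₁(ℝ^d)` (a constant plus the Fourier
transform of an `L¹` function), then there is a constant `C = C(α, β, d)` such that for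
all `1 ≤ p ≤ ∞`, `f ∈ L^p` and `ε > 0`,
`‖f - f * K^β_ε‖_p ≤ C ‖f - f * K^α_ε‖_p`, where `K^γ_ε ∈ L¹` has Fourier transform
`y ↦ e^{-(ε|y|)^γ}`. -/
theorem gauss_weierstrass_means_comparison {d : ℕ} (α β : ℝ)
    (hα : 0 < α) (hαβ : α < β)
    (hW : ∃ (c : ℂ) (g : EuclideanSpace ℝ (Fin d) → ℂ), Integrable g volume ∧
      ∀ x : EuclideanSpace ℝ (Fin d), x ≠ 0 →
        (((1 - Real.exp (-(‖x‖ ^ β))) / (1 - Real.exp (-(‖x‖ ^ α))) : ℝ) : ℂ)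
          = c + funFT g x) :
    ∃ C : ℝ≥0, ∀ (p : ℝ≥0∞), 1 ≤ p →
      ∀ f : EuclideanSpace ℝ (Fin d) → ℂ, MemLp f p volume →
      ∀ ε : ℝ, 0 < ε →
      ∀ Kα Kβ : EuclideanSpace ℝ (Fin d) → ℂ,
        Integrable Kα volume → Integrable Kβ volume →
        (∀ y, funFT Kα y = ((Real.exp (-((ε * ‖y‖) ^ α)) : ℝ) : ℂ)) →
        (∀ y, funFT Kβ y = ((Real.exp (-((ε * ‖y‖) ^ β)) : ℝ) : ℂ)) →
        eLpNorm (fun x => f x - funConv f Kβ x) p volume ≤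
          C * eLpNorm (fun x => f x - funConv f Kα x) p volume := by
  obtain ⟨c, g, hg, hW⟩ := hW
  have hβ : 0 < β := hα.trans hαβ
  refine ⟨1 + (eLpNorm g 1 volume).toNNReal, fun p hp f hf ε hε Kα Kβ hKα hKβ hFTα hFTβ => ?_⟩
  rcases eq_or_ne d 0 with rfl | hd
  · -- on `ℝ⁰`, convolving with `Kβ` is multiplication by `K̂β 0 = exp (-0 ^ β) = 1`
    have hzero : (fun x => f x - funConv f Kβ x) = 0 := funext fun x => by
      simp [funConv_eq_mul_funFT_zero, hFTβ, Real.zero_rpow hβ.ne']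
    simp [hzero]
  have : NeZero d := ⟨hd⟩
  obtain rfl : c = 1 := eq_one_of_forall_ratio_eq_add_funFT hα hβ hW
  have hC : ((1 + (eLpNorm g 1 volume).toNNReal : ℝ≥0) : ℝ≥0∞) =
      1 + eLpNorm (l1Dilation ε g) 1 volume := by
    rw [eLpNorm_one_l1Dilation hε hg, ENNReal.coe_add, ENNReal.coe_one,
      ENNReal.coe_toNNReal (memLp_one_iff_integrable.2 hg).eLpNorm_ne_top]
  rw [hC, funConv_eq_convolution, funConv_eq_convolution]
  exact hf.eLpNorm_sub_convolution_le hp (integrable_l1Dilation hε.ne' hg) hKα hKβ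
    (add_l1Dilation_ae_eq_add_convolution hε hg hKα hKβ hW hFTα hFTβ)
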